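/- arXiv:2301.11782 — 5 statements merged into one kernel-verified Lean document; each statement's English description precedes it below -/
import Mathlib

section
/- Let (p_n)_{n≥1} be the sequence of ordinary (rational) prime numbers and let N ≥ 1. Then for Lebesgue-almost every tuple (q_1, …, q_N) ∈ (1,∞)^N the following holds: the real numbers log 2, log 3, log 5, …, log q_1, …, log q_N are linearly independent over ℚ, the set 𝒩 = { m · q_1^{a_1} ⋯ q_N^{a_N} : m ∈ ℕ, m ≥ 1, (a_1,…,a_N) ∈ ℕ^N } is locally finite in [1,∞), and its strictly increasing enumeration (ν_n)_{n≥1} satisfies Bohr's condition: there exist c_1, c_2 > 0 such that ν_{n+1} − ν_n ≥ c_1 ν_{n+1}^{−c_2} for all n ≥ 1. -/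
open Set Filter MeasureTheory

noncomputable section

/-- A sequence of Beurling primes: strictly increasing, first term `> 1`,
tending to infinity, with logarithms linearly independent over `ℚ`. -/
def IsBeurlingPrimes (q : ℕ → ℝ) : Prop :=
  StrictMono q ∧ 1 < q 0 ∧ Tendsto q atTop atTop ∧
    LinearIndependent ℚ fun n => Real.log (q n)

/-- The set of Beurling integers: all finite products of the `q i` with
natural number exponents (including the empty product `1`). -/
def beurlingIntegers (q : ℕ → ℝ) : Set ℝ :=
  {x | ∃ e : ℕ →₀ ℕ, x = e.prod fun i k => q i ^ k}

/-- `ν` is the strictly increasing enumeration of `S`, tending to infinity. -/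
def IsEnumeration (ν : ℕ → ℝ) (S : Set ℝ) : Prop :=
  StrictMono ν ∧ Tendsto ν atTop atTop ∧ (∀ n, ν n ∈ S) ∧ ∀ x ∈ S, ∃ n, ν n = x

/-- Bohr's condition for the increasing enumeration `ν`:
`ν (n+1) - ν n ≥ c₁ * ν (n+1) ^ (-c₂)` for all `n`. -/
def BohrCondition (ν : ℕ → ℝ) : Prop :=
  ∃ c₁ > (0:ℝ), ∃ c₂ > (0:ℝ), ∀ n : ℕ, ν (n+1) - ν n ≥ c₁ * ν (n+1) ^ (-c₂)

/-- The Beurling prime counting function `π_q(x) = #{n : q_n ≤ x}`. -/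
def piQ (q : ℕ → ℝ) (x : ℝ) : ℕ := Nat.card {n : ℕ | q n ≤ x}

/-- The logarithmic integral `li x = ∫_1^x (1-1/u)/log u du`. -/
def li (x : ℝ) : ℝ := ∫ u in (1:ℝ)..x, (1 - u⁻¹) / Real.log u

/-- The abscissa of convergence `σ_c` of the Dirichlet series `∑ ν_n^{-s}`. -/
def sigmaC (ν : ℕ → ℝ) : ℝ := sInf {σ : ℝ | Summable fun n => ν n ^ (-σ)}

/-- The multiplicative system generated by the ordinary primes together with
the extra numbers `t 0, …, t (N-1)`. -/
def genSet {N : ℕ} (t : Fin N → ℝ) : Set ℝ :=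
  {x : ℝ | ∃ m : ℕ, 1 ≤ m ∧ ∃ a : Fin N → ℕ, x = (m : ℝ) * ∏ i, t i ^ a i}

/-!
Independence: a nontrivial rational relation among the `log p` and the `log t i` that involves
some `log t j` pins `t j`, for fixed other coordinates, to a finite set; there are countably many
relations, and those among the `log p` alone are excluded by unique factorisation.

Bohr's condition: on the box `[1 + 1/k, k]^N`, two generated numbers `(m+1) t^a` and `(m'+1) t^b`
with `a j > b j` differ by `t_j^{b j}` times an expanding function of `t j`, so they are
`ε`-close only on a set of measure `O(ε)`. Taking `ε = δ w(m,a) w(m',b)` with the summable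
weights `w(m,a) = (m+1)^{-2} k^{-2|a|}` leaves an exceptional set of measure `O(δ)`. Off it
every gap below `x` is at least `δ w w`, and `k ≤ t_i^L` for `L = log_{1+1/k} k` turns this
into `δ x^{-4(1+L)}`.
-/

open Function
open scoped ENNReal Topology

theorem volume_le_mul_of_volume_slice_le {ι : Type*} [Fintype ι] [DecidableEq ι]
    {S T : Set (ι → ℝ)} (hS : MeasurableSet S) (hT : MeasurableSet T) (j : ι) {c : ℝ≥0∞}
    (h : ∀ x, volume {y | update x j y ∈ S} ≤ c * volume {y | update x j y ∈ T}) :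
    volume S ≤ c * volume T := by
  have slice : ∀ {U : Set (ι → ℝ)}, MeasurableSet U → ∀ x,
      ∫⁻ y, U.indicator 1 (update x j y) = volume {y | update x j y ∈ U} := fun hU x =>
    lintegral_indicator_one (measurable_update x hU)
  calc volume S = ∫⁻ x, S.indicator 1 x ∂Measure.pi fun _ => volume := by
        rw [lintegral_indicator_one hS, volume_pi]
    _ ≤ ∫⁻ x, c * T.indicator 1 x ∂Measure.pi fun _ => volume := by
        refine lintegral_le_of_lmarginal_le {j} (measurable_one.indicator hS)
          ((measurable_one.indicator hT).const_mul c) fun x => ?_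
        simp only [lmarginal_singleton]
        rw [slice hS, lintegral_const_mul c (f := fun y => T.indicator 1 (update x j y))
          ((measurable_one.indicator hT).comp (measurable_update x)), slice hT]
        exact h x
    _ = c * volume T := by
        rw [lintegral_const_mul _ (measurable_one.indicator hT), lintegral_indicator_one hT,
          volume_pi]

theorem volume_setOf_abs_sub_lt_le {s : Set ℝ} {f : ℝ → ℝ}
    (hf : ∀ x ∈ s, ∀ y ∈ s, |x - y| ≤ |f x - f y|) (b ε : ℝ) :
    volume {x ∈ s | |f x - b| < ε} ≤ ENNReal.ofReal (2 * ε) := by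
  refine (Real.volume_le_diam _).trans (Metric.ediam_le_of_forall_dist_le ?_)
  rintro x ⟨hx, hxb⟩ y ⟨hy, hyb⟩
  rw [abs_lt] at hxb hyb
  refine (hf x hx y hy).trans (abs_le.mpr ⟨?_, ?_⟩) <;> linarith

theorem abs_sub_le_abs_pow_sub_pow {x y : ℝ} (hx : 1 ≤ x) (hy : 1 ≤ y) {d : ℕ}
    (hd : d ≠ 0) : |x - y| ≤ |x ^ d - y ^ d| := by
  wlog hyx : y ≤ x generalizing x y
  · rw [abs_sub_comm, abs_sub_comm (x ^ d)]
    exact this hy hx (le_of_not_ge hyx)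
  rw [abs_of_nonneg (sub_nonneg.2 hyx),
    abs_of_nonneg (sub_nonneg.2 (pow_le_pow_left₀ (by linarith) hyx d)), ← geom_sum₂_mul]
  refine le_mul_of_one_le_left (sub_nonneg.2 hyx) ?_
  calc (1 : ℝ) ≤ x ^ 0 * y ^ (d - 1 - 0) := by simpa using one_le_pow₀ hy
    _ ≤ ∑ i ∈ Finset.range d, x ^ i * y ^ (d - 1 - i) :=
      Finset.single_le_sum (f := fun i => x ^ i * y ^ (d - 1 - i)) (fun i _ => by positivity)
        (Finset.mem_range.2 (Nat.pos_of_ne_zero hd))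

theorem le_rpow_logb {b k t : ℝ} (hb : 1 < b) (hk : 1 ≤ k) (hbt : b ≤ t) :
    k ≤ t ^ Real.logb b k := by
  calc k = b ^ Real.logb b k := (Real.rpow_logb (by linarith) hb.ne' (by linarith)).symm
    _ ≤ t ^ Real.logb b k := Real.rpow_le_rpow (by linarith) hbt (Real.logb_nonneg hb hk)

theorem Real.finite_setOf_log_eq (r : ℝ) : {x : ℝ | Real.log x = r}.Finite := by
  refine (toFinite {0, Real.exp r, -Real.exp r}).subset fun x hx => ?_
  rcases eq_or_ne x 0 with rfl | hx₀
  · simp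
  have : |x| = Real.exp r := by rw [← Real.exp_log_eq_abs hx₀, hx]
  rcases (abs_eq (Real.exp_pos r).le).1 this with h | h <;> simp [h]

lemma finite_setOf_pow_le {b : ℝ} (hb : 1 < b) (x : ℝ) : {n : ℕ | b ^ n ≤ x}.Finite := by
  have h := (tendsto_pow_atTop_atTop_of_one_lt hb).eventually_gt_atTop x
  rw [← Nat.cofinite_eq_atTop] at h
  simpa only [not_lt] using eventually_cofinite.1 h

theorem ENNReal.tsum_fin_prod_eq_pow {α : Type*} (f : α → ℝ≥0∞) (N : ℕ) :
    ∑' a : Fin N → α, ∏ i, f (a i) = (∑' x, f x) ^ N := by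
  induction N with
  | zero => simp
  | succ N ih =>
    rw [← (Fin.consEquiv fun _ => α).tsum_eq, ENNReal.tsum_prod', pow_succ']
    simp [Fin.consEquiv, Fin.prod_univ_succ, ENNReal.tsum_mul_left, ENNReal.tsum_mul_right, ih]

lemma factorization_prod_pow_nth_prime (s : Finset ℕ) (e : ℕ → ℕ) {i : ℕ} (hi : i ∈ s) :
    (∏ n ∈ s, Nat.nth Nat.Prime n ^ e n).factorization (Nat.nth Nat.Prime i) = e i := by
  have hprime := Nat.prime_nth_prime
  rw [Nat.factorization_prod fun n _ => pow_ne_zero _ (hprime n).ne_zero, Finset.sum_apply',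
    Finset.sum_eq_single_of_mem i hi fun n _ hni => ?_]
  · simp [(hprime i).factorization_pow]
  · rw [(hprime n).factorization_pow, Finsupp.single_eq_of_ne]
    exact fun h => hni (Nat.nth_injective Nat.infinite_setOfPred_prime h.symm)

theorem linearIndependent_log_nth_prime :
    LinearIndependent ℚ fun n => Real.log (Nat.nth Nat.Prime n) := by
  refine (LinearIndependent.iff_fractionRing ℤ ℚ).1
    (linearIndependent_iff'.2 fun s g hg i hi => ?_)
  have hp : ∀ n, (0 : ℝ) < Nat.nth Nat.Prime n := fun n => by
    exact_mod_cast (Nat.prime_nth_prime n).pos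
  have hpos : ∀ e : ℕ → ℕ, (0 : ℝ) < ∏ n ∈ s, (Nat.nth Nat.Prime n : ℝ) ^ e n :=
    fun e => Finset.prod_pos fun n _ => pow_pos (hp n) _
  have hlog : ∀ e : ℕ → ℕ, Real.log (∏ n ∈ s, (Nat.nth Nat.Prime n : ℝ) ^ e n) =
      ∑ n ∈ s, (e n : ℝ) * Real.log (Nat.nth Nat.Prime n) := fun e => by
    rw [Real.log_prod fun n _ => (pow_pos (hp n) _).ne']
    simp [Real.log_pow]
  have heq : ∏ n ∈ s, Nat.nth Nat.Prime n ^ (g n).toNat =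
      ∏ n ∈ s, Nat.nth Nat.Prime n ^ (-g n).toNat := by
    refine Nat.cast_injective (R := ℝ) ?_
    push_cast
    refine Real.log_injOn_pos (hpos _) (hpos _) ?_
    rw [hlog, hlog, ← sub_eq_zero, ← Finset.sum_sub_distrib, ← hg]
    refine Finset.sum_congr rfl fun n _ => ?_
    rw [← sub_mul, zsmul_eq_mul]
    congr 1
    exact_mod_cast Int.toNat_sub_toNat_neg (g n)
  have := congrArg (fun m => m.factorization (Nat.nth Nat.Prime i)) heq
  simp only [factorization_prod_pow_nth_prime s _ hi] at this
  omega

section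

variable {κ ι : Type*}

lemma linearCombination_sumElim_log_update_sub [DecidableEq ι] (f : κ → ℝ)
    (l : κ ⊕ ι →₀ ℚ) (x : ι → ℝ) (j : ι) (y : ℝ) :
    Finsupp.linearCombination ℚ (Sum.elim f fun i => Real.log (update x j y i)) l -
      Finsupp.linearCombination ℚ (Sum.elim f fun i => Real.log (update x j 1 i)) l =
        l (Sum.inr j) * Real.log y := by
  simp only [Finsupp.linearCombination_apply, Finsupp.sum, ← Finset.sum_sub_distrib, ← smul_sub]
  rw [Finset.sum_eq_single (Sum.inr j)]
  · simp [Rat.smul_def]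
  · rintro (n | i) _ hne
    · simp
    · simp [update_of_ne (fun h : i = j => hne (h ▸ rfl))]
  · intro h
    simp [Finsupp.notMem_support_iff.1 h]

lemma measurable_linearCombination_sumElim_log [Fintype ι] (f : κ → ℝ) (l : κ ⊕ ι →₀ ℚ) :
    Measurable fun t : ι → ℝ =>
      Finsupp.linearCombination ℚ (Sum.elim f fun i => Real.log (t i)) l := by
  simp only [Finsupp.linearCombination_apply, Finsupp.sum]
  refine Finset.measurable_sum _ fun s _ => ?_
  rcases s with n | i <;> simp only [Sum.elim_inl, Sum.elim_inr] <;> fun_prop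

lemma volume_setOf_linearCombination_sumElim_log_eq_zero [Fintype ι] {f : κ → ℝ}
    (hf : LinearIndependent ℚ f) {l : κ ⊕ ι →₀ ℚ} (hl : l ≠ 0) :
    volume {t : ι → ℝ |
      Finsupp.linearCombination ℚ (Sum.elim f fun i => Real.log (t i)) l = 0} = 0 := by
  classical
  by_cases hι : ∃ j, l (Sum.inr j) ≠ 0
  · obtain ⟨j, hj⟩ := hι
    have hmeas := measurableSet_eq_fun (measurable_linearCombination_sumElim_log (ι := ι) f l)
      (measurable_const (a := (0 : ℝ)))
    refine nonpos_iff_eq_zero.1 ((volume_le_mul_of_volume_slice_le hmeas MeasurableSet.univ j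
      fun x => ?_).trans_eq (zero_mul _))
    rw [zero_mul, nonpos_iff_eq_zero]
    set c := Finsupp.linearCombination ℚ (Sum.elim f fun i => Real.log (update x j 1 i)) l
    refine measure_mono_null (fun y (hy : _ = 0) => ?_)
      ((Real.finite_setOf_log_eq (-c / l (Sum.inr j))).measure_zero volume)
    have hrel := linearCombination_sumElim_log_update_sub f l x j y
    rw [hy] at hrel
    rw [mem_ofPred_eq, eq_div_iff (by exact_mod_cast hj)]
    linarith
  · push Not at hι
    refine measure_mono_null (fun t (ht : _ = 0) => hl ?_) measure_empty
    have hsupp : (l.support : Set (κ ⊕ ι)) ⊆ range Sum.inl := by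
      rintro (n | i) hs
      · exact mem_range_self n
      · exact absurd (hι i) (Finsupp.mem_support_iff.1 hs)
    rw [← Finsupp.mapDomain_comapDomain _ Sum.inl_injective l hsupp] at ht ⊢
    rw [Finsupp.linearCombination_mapDomain] at ht
    rw [linearIndependent_iff.1 hf _ ht, Finsupp.mapDomain_zero]

theorem ae_linearIndependent_sumElim_log [Countable κ] [Fintype ι] {f : κ → ℝ}
    (hf : LinearIndependent ℚ f) :
    ∀ᵐ t : ι → ℝ, LinearIndependent ℚ (Sum.elim f fun i => Real.log (t i)) := by
  rw [ae_iff]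
  refine measure_mono_null (fun t ht => ?_)
    (measure_iUnion_null fun l : {l : κ ⊕ ι →₀ ℚ // l ≠ 0} =>
      volume_setOf_linearCombination_sumElim_log_eq_zero hf l.2)
  rw [mem_ofPred_eq, linearIndependent_iff] at ht
  push Not at ht
  obtain ⟨l, hl, hne⟩ := ht
  exact mem_iUnion.2 ⟨⟨l, hne⟩, hl⟩

end

namespace Bohr

variable {N : ℕ}

abbrev Index (N : ℕ) : Type := ℕ × (Fin N → ℕ)

/-- Indexing by `m + 1` instead of `m ≥ 1` makes the index set a full product
(see `genSet_eq_range`). -/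
def genVal (t : Fin N → ℝ) (p : Index N) : ℝ := (p.1 + 1) * ∏ i, t i ^ p.2 i

def cofactor (x : Fin N → ℝ) (j : Fin N) (p : Index N) : ℝ :=
  (p.1 + 1) * ∏ i ∈ Finset.univ.erase j, x i ^ p.2 i

def box (N : ℕ) (k : ℝ) : Set (Fin N → ℝ) := univ.pi fun _ => Icc (1 + k⁻¹) k

def gapWeight (k : ℝ) (p : Index N) : ℝ :=
  (((p.1 : ℝ) + 1) ^ 2)⁻¹ * ∏ i, ((k ^ 2)⁻¹) ^ p.2 i

def boxExponent (k : ℝ) : ℝ := 1 + Real.logb (1 + k⁻¹) k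

def nearCoincidences (k δ : ℝ) (p q : Index N) : Set (Fin N → ℝ) :=
  {t ∈ box N k | genVal t p ≠ genVal t q ∧
    |genVal t p - genVal t q| < δ * gapWeight k p * gapWeight k q}

def exceptionalSet (k : ℝ) : Set (Fin N → ℝ) :=
  ⋂ n : ℕ, ⋃ pq : Index N × Index N,
    nearCoincidences k ((n : ℝ) + 1)⁻¹ pq.1 pq.2

lemma genSet_eq_range (t : Fin N → ℝ) : genSet t = range (genVal t) := by
  ext x
  constructor
  · rintro ⟨m, hm, a, rfl⟩
    exact ⟨(m - 1, a), by simp [genVal, Nat.cast_sub hm]⟩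
  · rintro ⟨p, rfl⟩
    exact ⟨p.1 + 1, by omega, p.2, by simp [genVal]⟩

lemma one_le_of_mem_box {k : ℝ} (hk : 0 ≤ k) {t : Fin N → ℝ} (ht : t ∈ box N k)
    (i : Fin N) : 1 ≤ t i :=
  le_trans (by simp [hk]) (ht i trivial).1

lemma one_le_prod_pow {t : Fin N → ℝ} (ht : ∀ i, 1 ≤ t i) (a : Fin N → ℕ) :
    1 ≤ ∏ i, t i ^ a i :=
  Finset.one_le_prod fun i _ => one_le_pow₀ (ht i)

lemma natCast_add_one_le_genVal {t : Fin N → ℝ} (ht : ∀ i, 1 ≤ t i) (p : Index N) :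
    (p.1 : ℝ) + 1 ≤ genVal t p :=
  le_mul_of_one_le_right (by positivity) (one_le_prod_pow ht p.2)

lemma prod_pow_le_genVal {t : Fin N → ℝ} (ht : ∀ i, 1 ≤ t i) (p : Index N) :
    ∏ i, t i ^ p.2 i ≤ genVal t p :=
  le_mul_of_one_le_left (zero_le_one.trans (one_le_prod_pow ht p.2)) (by simp)

lemma one_le_genVal {t : Fin N → ℝ} (ht : ∀ i, 1 ≤ t i) (p : Index N) :
    1 ≤ genVal t p :=
  (le_add_of_nonneg_left p.1.cast_nonneg).trans (natCast_add_one_le_genVal ht p)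

lemma genVal_update (x : Fin N → ℝ) (j : Fin N) (y : ℝ) (p : Index N) :
    genVal (update x j y) p = cofactor x j p * y ^ p.2 j := by
  rw [genVal, cofactor, ← Finset.mul_prod_erase _ _ (Finset.mem_univ j), update_self,
    Finset.prod_congr rfl fun i hi => by rw [update_of_ne (Finset.ne_of_mem_erase hi)]]
  ring

lemma one_le_cofactor {x : Fin N → ℝ} {j : Fin N} (hx : ∀ i ≠ j, 1 ≤ x i)
    (p : Index N) : 1 ≤ cofactor x j p :=
  one_le_mul_of_one_le_of_one_le (by simp) (Finset.one_le_prod fun i hi =>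
    one_le_pow₀ (hx i (Finset.ne_of_mem_erase hi)))

lemma gapWeight_nonneg (k : ℝ) (p : Index N) : 0 ≤ gapWeight k p := by
  unfold gapWeight; positivity

lemma gapWeight_le_one {k : ℝ} (hk : 1 ≤ k) (p : Index N) : gapWeight k p ≤ 1 := by
  unfold gapWeight
  refine mul_le_one₀ (inv_le_one_of_one_le₀ (one_le_pow₀ (by simp)))
    (Finset.prod_nonneg fun _ _ => by positivity)
    (Finset.prod_le_one (fun _ _ => by positivity) fun i _ =>
      pow_le_one₀ (by positivity) (inv_le_one_of_one_le₀ (one_le_pow₀ hk)))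

lemma gapWeight_eq (k : ℝ) (p : Index N) :
    gapWeight k p = ((((p.1 : ℝ) + 1) * ∏ i, k ^ p.2 i) ^ 2)⁻¹ := by
  simp only [gapWeight, mul_pow, mul_inv, ← Finset.prod_pow, ← Finset.prod_inv_distrib,
    ← pow_mul, inv_pow, mul_comm 2]

lemma measurableSet_box (N : ℕ) (k : ℝ) : MeasurableSet (box N k) :=
  MeasurableSet.univ_pi fun _ => measurableSet_Icc

lemma measurable_genVal (p : Index N) : Measurable fun t : Fin N → ℝ => genVal t p :=
  (Finset.measurable_prod _ fun i _ => (measurable_pi_apply i).pow_const _).const_mul _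

lemma measurableSet_nearCoincidences (k δ : ℝ) (p q : Index N) :
    MeasurableSet (nearCoincidences k δ p q) :=
  (measurableSet_box N k).inter
    ((measurableSet_eq_fun (measurable_genVal p) (measurable_genVal q)).compl.inter
      (measurableSet_lt ((measurable_genVal p).sub (measurable_genVal q)).abs measurable_const))

lemma nearCoincidences_comm (k δ : ℝ) (p q : Index N) :
    nearCoincidences k δ p q = nearCoincidences k δ q p := by
  ext t
  simp only [nearCoincidences, mem_ofPred_eq, ne_comm, abs_sub_comm, mul_right_comm]

lemma nearCoincidences_eq_empty_of_snd_eq {k δ : ℝ} (hk : 1 ≤ k) (hδ : δ ≤ 1)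
    {p q : Index N} (hpq : p.2 = q.2) : nearCoincidences k δ p q = ∅ := by
  refine eq_empty_of_forall_notMem fun t ⟨ht, hne, hlt⟩ => ?_
  have hdiff : genVal t p - genVal t q = ((p.1 : ℝ) - q.1) * ∏ i, t i ^ p.2 i := by
    simp only [genVal, hpq]; ring
  have hm : (1 : ℝ) ≤ |(p.1 : ℝ) - q.1| := by
    have : p.1 ≠ q.1 := fun h => hne (by simp [genVal, h, hpq])
    rcases Nat.lt_or_gt_of_ne this with h | h
    · have : (p.1 : ℝ) + 1 ≤ q.1 := by exact_mod_cast h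
      exact le_abs.2 (Or.inr (by linarith))
    · have : (q.1 : ℝ) + 1 ≤ p.1 := by exact_mod_cast h
      exact le_abs.2 (Or.inl (by linarith))
  have hw : gapWeight k p * gapWeight k q ≤ 1 :=
    mul_le_one₀ (gapWeight_le_one hk p) (gapWeight_nonneg k q) (gapWeight_le_one hk q)
  have hw₀ := mul_nonneg (gapWeight_nonneg k p) (gapWeight_nonneg k q)
  have hP := one_le_prod_pow (one_le_of_mem_box (by linarith) ht) p.2
  rw [hdiff, abs_mul, abs_of_pos (zero_lt_one.trans_le hP)] at hlt
  nlinarith [mul_nonneg (sub_nonneg.2 hδ) hw₀]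

lemma setOf_update_mem_nearCoincidences_subset {k δ : ℝ} (hk : 0 ≤ k)
    {p q : Index N} {j : Fin N} (hlt : q.2 j < p.2 j) (x : Fin N → ℝ) :
    {y | update x j y ∈ nearCoincidences k δ p q} ⊆
      {y ∈ Ici 1 | |cofactor x j p * y ^ (p.2 j - q.2 j) - cofactor x j q| <
        δ * gapWeight k p * gapWeight k q} := by
  rintro y ⟨hbox, -, hclose⟩
  have hy : 1 ≤ y := by simpa using one_le_of_mem_box hk hbox j
  refine ⟨hy, lt_of_le_of_lt ?_ hclose⟩
  have hpow : y ^ p.2 j = y ^ (p.2 j - q.2 j) * y ^ q.2 j := by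
    rw [← pow_add, Nat.sub_add_cancel hlt.le]
  rw [genVal_update, genVal_update, hpow, show ∀ A B : ℝ,
      A * (y ^ (p.2 j - q.2 j) * y ^ q.2 j) - B * y ^ q.2 j =
        y ^ q.2 j * (A * y ^ (p.2 j - q.2 j) - B) from fun A B => by ring,
    abs_mul, abs_of_pos (pow_pos (by linarith) _ : (0 : ℝ) < y ^ q.2 j)]
  exact le_mul_of_one_le_left (abs_nonneg _) (one_le_pow₀ hy)

lemma volume_slice_nearCoincidences_le {k δ : ℝ} (hk : 2 ≤ k) {p q : Index N}
    {j : Fin N} (hlt : q.2 j < p.2 j) (x : Fin N → ℝ) :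
    volume {y | update x j y ∈ nearCoincidences k δ p q} ≤
      ENNReal.ofReal (4 * (δ * gapWeight k p * gapWeight k q)) *
        volume {y | update x j y ∈ box N k} := by
  set ε := δ * gapWeight k p * gapWeight k q
  rcases eq_empty_or_nonempty {y | update x j y ∈ nearCoincidences k δ p q} with
    h | ⟨y₀, hy₀⟩
  · simp [h]
  have hx : ∀ i ≠ j, x i ∈ Icc (1 + k⁻¹) k := fun i hi => by
    simpa [update_of_ne hi] using hy₀.1 i trivial
  have hA := one_le_cofactor (fun i hi => le_trans (by simp; positivity) (hx i hi).1) p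
  have hexpand : ∀ y ∈ Ici (1 : ℝ), ∀ z ∈ Ici (1 : ℝ), |y - z| ≤
      |cofactor x j p * y ^ (p.2 j - q.2 j) - cofactor x j p * z ^ (p.2 j - q.2 j)| :=
    fun y hy z hz => by
      rw [← mul_sub, abs_mul, abs_of_pos (by linarith : (0 : ℝ) < cofactor x j p)]
      exact (abs_sub_le_abs_pow_sub_pow hy hz (Nat.sub_ne_zero_of_lt hlt)).trans
        (le_mul_of_one_le_left (abs_nonneg _) hA)
  have hIcc : Icc (1 + k⁻¹) k ⊆ {y | update x j y ∈ box N k} := fun y hy i _ => by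
    rcases eq_or_ne i j with rfl | hi
    · simpa using hy
    · simpa [update_of_ne hi] using hx i hi
  calc volume {y | update x j y ∈ nearCoincidences k δ p q}
      ≤ ENNReal.ofReal (2 * ε) :=
        (measure_mono (setOf_update_mem_nearCoincidences_subset (by linarith) hlt x)).trans
          (volume_setOf_abs_sub_lt_le hexpand _ ε)
    _ = ENNReal.ofReal (4 * ε) * ENNReal.ofReal 2⁻¹ := by
        rw [← ENNReal.ofReal_mul' (by norm_num)]
        ring_nf
    _ ≤ ENNReal.ofReal (4 * ε) * volume (Icc (1 + k⁻¹) k) := by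
        rw [Real.volume_Icc]
        gcongr
        linarith [inv_anti₀ (by norm_num : (0 : ℝ) < 2) hk]
    _ ≤ _ := by gcongr

lemma volume_nearCoincidences_le {k δ : ℝ} (hk : 2 ≤ k) (hδ : δ ≤ 1)
    (p q : Index N) :
    volume (nearCoincidences k δ p q) ≤
      ENNReal.ofReal (4 * (δ * gapWeight k p * gapWeight k q)) * volume (box N k) := by
  by_cases hpq : p.2 = q.2
  · simp [nearCoincidences_eq_empty_of_snd_eq (by linarith : (1 : ℝ) ≤ k) hδ hpq]
  obtain ⟨j, hj⟩ := Function.ne_iff.1 hpq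
  wlog hlt : q.2 j < p.2 j generalizing p q
  · rw [nearCoincidences_comm, mul_right_comm δ (gapWeight k p)]
    exact this q p (Ne.symm hpq) hj.symm (lt_of_le_of_ne (not_lt.1 hlt) hj)
  exact volume_le_mul_of_volume_slice_le (measurableSet_nearCoincidences k δ p q)
    (measurableSet_box N k) j (volume_slice_nearCoincidences_le hk hlt)

lemma tsum_ofReal_gapWeight_ne_top {k : ℝ} (hk : 1 < k) :
    ∑' p : Index N, ENNReal.ofReal (gapWeight k p) ≠ ⊤ := by
  have hsplit : ∀ p : Index N, ENNReal.ofReal (gapWeight k p) =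
      ENNReal.ofReal (((p.1 : ℝ) + 1) ^ 2)⁻¹ * ∏ i, ENNReal.ofReal (k ^ 2)⁻¹ ^ p.2 i := by
    intro p
    rw [gapWeight, ENNReal.ofReal_mul (by positivity),
      ENNReal.ofReal_prod_of_nonneg fun _ _ => by positivity]
    simp only [ENNReal.ofReal_pow (by positivity : (0 : ℝ) ≤ (k ^ 2)⁻¹)]
  have hsq : Summable fun m : ℕ => (((m : ℝ) + 1) ^ 2)⁻¹ := by
    simpa using (summable_nat_add_iff 1).2 (Real.summable_nat_pow_inv.2 one_lt_two)
  have hr : ENNReal.ofReal (k ^ 2)⁻¹ < 1 :=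
    ENNReal.ofReal_lt_one.2 (inv_lt_one_of_one_lt₀ (one_lt_pow₀ hk two_ne_zero))
  rw [tsum_congr hsplit, ENNReal.tsum_prod']
  simp_rw [ENNReal.tsum_mul_left,
    ENNReal.tsum_fin_prod_eq_pow fun n => ENNReal.ofReal (k ^ 2)⁻¹ ^ n]
  rw [ENNReal.tsum_mul_right, ENNReal.tsum_geometric,
    ← ENNReal.ofReal_tsum_of_nonneg (fun _ => by positivity) hsq]
  exact ENNReal.mul_ne_top ENNReal.ofReal_ne_top
    (ENNReal.pow_ne_top (ENNReal.inv_ne_top.2 (tsub_pos_of_lt hr).ne'))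

lemma volume_iUnion_nearCoincidences_le {k δ : ℝ} (hk : 2 ≤ k) (hδ₀ : 0 ≤ δ)
    (hδ₁ : δ ≤ 1) :
    volume (⋃ pq : Index N × Index N, nearCoincidences k δ pq.1 pq.2) ≤
      ENNReal.ofReal δ * (4 * (∑' p : Index N, ENNReal.ofReal (gapWeight k p)) ^ 2 *
        volume (box N k)) := by
  refine (measure_iUnion_le _).trans ?_
  calc ∑' pq : Index N × Index N, volume (nearCoincidences k δ pq.1 pq.2)
      ≤ ∑' pq : Index N × Index N,
          ENNReal.ofReal δ * 4 * volume (box N k) *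
            (ENNReal.ofReal (gapWeight k pq.1) * ENNReal.ofReal (gapWeight k pq.2)) := by
        refine ENNReal.tsum_le_tsum fun pq =>
          (volume_nearCoincidences_le hk hδ₁ _ _).trans_eq ?_
        rw [ENNReal.ofReal_mul (by norm_num),
          ENNReal.ofReal_mul (mul_nonneg hδ₀ (gapWeight_nonneg k pq.1)),
          ENNReal.ofReal_mul hδ₀, ENNReal.ofReal_ofNat]
        ring
    _ = _ := by
        rw [ENNReal.tsum_mul_left, ENNReal.tsum_prod']
        simp_rw [ENNReal.tsum_mul_left, ENNReal.tsum_mul_right]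
        ring

lemma volume_exceptionalSet {k : ℝ} (hk : 2 ≤ k) : volume (exceptionalSet (N := N) k) = 0 := by
  set C := 4 * (∑' p : Index N, ENNReal.ofReal (gapWeight k p)) ^ 2 * volume (box N k)
  have hC : C ≠ ⊤ := ENNReal.mul_ne_top (ENNReal.mul_ne_top ENNReal.ofNat_ne_top
    (ENNReal.pow_ne_top (tsum_ofReal_gapWeight_ne_top (by linarith))))
    (isCompact_univ_pi fun _ => isCompact_Icc).measure_lt_top.ne
  have hlim : Tendsto (fun n : ℕ => ENNReal.ofReal ((n : ℝ) + 1)⁻¹ * C) atTop (𝓝 0) := by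
    simpa using ENNReal.Tendsto.mul_const
      (ENNReal.tendsto_ofReal tendsto_one_div_add_atTop_nhds_zero_nat) (Or.inr hC)
  refine le_antisymm (ge_of_tendsto' hlim fun n => ?_) zero_le
  exact (measure_mono (iInter_subset _ n)).trans
    (volume_iUnion_nearCoincidences_le hk (by positivity) (inv_le_one_of_one_le₀ (by simp)))

lemma logb_one_add_inv_nonneg {k : ℝ} (hk : 2 ≤ k) : 0 ≤ Real.logb (1 + k⁻¹) k :=
  Real.logb_nonneg (by simp; positivity) (by linarith)

lemma one_le_boxExponent {k : ℝ} (hk : 2 ≤ k) : 1 ≤ boxExponent k :=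
  le_add_of_nonneg_right (logb_one_add_inv_nonneg hk)

/-- On the box `k ≤ t i ^ (boxExponent k - 1)`, as `(1 + k⁻¹) ^ logb (1 + k⁻¹) k = k`. -/
lemma mul_prod_pow_le_genVal_rpow {k : ℝ} (hk : 2 ≤ k) {t : Fin N → ℝ} (ht : t ∈ box N k)
    (p : Index N) :
    ((p.1 : ℝ) + 1) * ∏ i, k ^ p.2 i ≤ genVal t p ^ boxExponent k := by
  have ht₁ : ∀ i, 1 ≤ t i := one_le_of_mem_box (by linarith) ht
  have hx := one_le_genVal ht₁ p
  have hkP : ∏ i, k ^ p.2 i ≤ (∏ i, t i ^ p.2 i) ^ Real.logb (1 + k⁻¹) k := by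
    rw [← Real.finsetProd_rpow _ _ fun i _ => by have := ht₁ i; positivity]
    gcongr with i
    rw [← Real.rpow_pow_comm (by linarith [ht₁ i])]
    exact pow_le_pow_left₀ (by linarith)
      (le_rpow_logb (by simp; positivity) (by linarith) (ht i trivial).1) _
  rw [boxExponent, Real.rpow_add (by linarith), Real.rpow_one]
  exact mul_le_mul (natCast_add_one_le_genVal ht₁ p)
    (hkP.trans (Real.rpow_le_rpow (by linarith [one_le_prod_pow ht₁ p.2])
      (prod_pow_le_genVal ht₁ p) (logb_one_add_inv_nonneg hk))) (by positivity) (by linarith)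

lemma genVal_rpow_neg_le_gapWeight {k : ℝ} (hk : 2 ≤ k) {t : Fin N → ℝ} (ht : t ∈ box N k)
    (p : Index N) :
    genVal t p ^ (-(boxExponent k * 2)) ≤ gapWeight k p := by
  have hx := one_le_genVal (one_le_of_mem_box (by linarith) ht) p
  rw [gapWeight_eq, Real.rpow_neg (by linarith), Real.rpow_mul (by linarith), Real.rpow_two]
  exact inv_anti₀ (by positivity)
    (pow_le_pow_left₀ (by positivity) (mul_prod_pow_le_genVal_rpow hk ht p) 2)

lemma sub_ge_of_forall_notMem_nearCoincidences {k δ : ℝ} (hk : 2 ≤ k) (hδ : 0 ≤ δ)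
    {t : Fin N → ℝ} (ht : t ∈ box N k) (hgood : ∀ p q, t ∉ nearCoincidences k δ p q)
    {p q : Index N} (hqp : genVal t q < genVal t p) :
    δ * genVal t p ^ (-(boxExponent k * 4)) ≤ genVal t p - genVal t q := by
  have hy := one_le_genVal (one_le_of_mem_box (by linarith) ht) q
  have hfar : δ * gapWeight k p * gapWeight k q ≤ genVal t p - genVal t q := by
    by_contra h
    exact hgood p q ⟨ht, hqp.ne', by rw [abs_of_pos (sub_pos.2 hqp)]; linarith⟩
  have hwq : genVal t p ^ (-(boxExponent k * 2)) ≤ gapWeight k q :=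
    (Real.rpow_le_rpow_of_nonpos (by linarith) hqp.le
      (by linarith [one_le_boxExponent hk])).trans (genVal_rpow_neg_le_gapWeight hk ht q)
  calc δ * genVal t p ^ (-(boxExponent k * 4))
      = δ * genVal t p ^ (-(boxExponent k * 2)) * genVal t p ^ (-(boxExponent k * 2)) := by
        rw [mul_assoc, ← Real.rpow_add (by linarith)]
        ring_nf
    _ ≤ δ * gapWeight k p * gapWeight k q :=
        mul_le_mul (mul_le_mul_of_nonneg_left (genVal_rpow_neg_le_gapWeight hk ht p) hδ) hwq
          (Real.rpow_nonneg (by linarith) _) (mul_nonneg hδ (gapWeight_nonneg k p))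
    _ ≤ _ := hfar

lemma exists_mem_box {t : Fin N → ℝ} (ht : ∀ i, 1 < t i) :
    ∃ n : ℕ, 2 ≤ n ∧ t ∈ box N n := by
  refine ((eventually_ge_atTop 2).and (eventually_all.2 fun i => ?_)).exists
  refine ((tendsto_inv_atTop_nhds_zero_nat.eventually_le_const (sub_pos.2 (ht i))).and
    (tendsto_natCast_atTop_atTop.eventually_ge_atTop (t i))).mono fun n hn _ =>
    ⟨by linarith [hn.1], hn.2⟩

theorem ae_exists_gap_bound (N : ℕ) :
    ∀ᵐ t : Fin N → ℝ, (∀ i, 1 < t i) → ∃ c₁ > (0 : ℝ), ∃ c₂ > (0 : ℝ),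
      ∀ x ∈ genSet t, ∀ y ∈ genSet t, y < x → c₁ * x ^ (-c₂) ≤ x - y := by
  rw [ae_iff]
  refine measure_mono_null (fun t ht => ?_) (measure_iUnion_null fun n : ℕ =>
    measure_iUnion_null fun hn : 2 ≤ n => volume_exceptionalSet (N := N) (k := n)
      (by exact_mod_cast hn))
  obtain ⟨ht₁, hbad⟩ := Classical.not_imp.1 ht
  obtain ⟨n, hn, htn⟩ := exists_mem_box ht₁
  have hk : (2 : ℝ) ≤ n := by exact_mod_cast hn
  simp only [exceptionalSet, mem_iUnion, mem_iInter]
  refine ⟨n, hn, fun j => not_forall_not.1 fun hgood => hbad ?_⟩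
  refine ⟨((j : ℝ) + 1)⁻¹, by positivity, boxExponent n * 4,
    by linarith [one_le_boxExponent hk], ?_⟩
  rw [genSet_eq_range]
  rintro _ ⟨p, rfl⟩ _ ⟨q, rfl⟩ hqp
  exact sub_ge_of_forall_notMem_nearCoincidences hk (by positivity) htn
    (fun p q => hgood (p, q)) hqp

theorem finite_setOf_mem_genSet_le {t : Fin N → ℝ} (ht : ∀ i, 1 < t i) (x : ℝ) :
    {y ∈ genSet t | y ≤ x}.Finite := by
  have ht₁ : ∀ i, 1 ≤ t i := fun i => (ht i).le
  have hfin : {p : Index N | genVal t p ≤ x}.Finite := by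
    refine ((finite_Iic ⌊x⌋₊).prod (Finite.pi' fun i => finite_setOf_pow_le (ht i) x)).subset
      fun p (hp : genVal t p ≤ x) => ⟨Nat.le_floor ?_, fun i => ?_⟩
    · linarith [natCast_add_one_le_genVal ht₁ p]
    · calc t i ^ p.2 i ≤ ∏ i, t i ^ p.2 i := by
            simpa using Finset.prod_le_prod_of_subset_of_one_le (Finset.subset_univ {i})
              (by simp; positivity [(ht₁ i)]) fun j _ _ => one_le_pow₀ (ht₁ j)
        _ ≤ x := (prod_pow_le_genVal ht₁ p).trans hp
  rw [genSet_eq_range]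
  exact (hfin.image (genVal t)).subset fun y ⟨⟨p, hp⟩, hy⟩ =>
    ⟨p, show genVal t p ≤ x from hp ▸ hy, hp⟩

end Bohr

theorem bohr_condition_ae_extension_of_rational_primes_general (N : ℕ) :
    ∀ᵐ t : Fin N → ℝ ∂volume, (∀ i, 1 < t i) →
      (LinearIndependent ℚ
          (Sum.elim (fun n : ℕ => Real.log (Nat.nth Nat.Prime n))
            (fun i : Fin N => Real.log (t i)))) ∧
      (∀ x : ℝ, {y ∈ genSet t | y ≤ x}.Finite) ∧
      (∀ ν : ℕ → ℝ, StrictMono ν → (∀ n, ν n ∈ genSet t) →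
        (∀ y ∈ genSet t, ∃ n, ν n = y) → BohrCondition ν) := by
  filter_upwards [ae_linearIndependent_sumElim_log (ι := Fin N) linearIndependent_log_nth_prime,
    Bohr.ae_exists_gap_bound N] with t hindep hgap ht
  obtain ⟨c₁, hc₁, c₂, hc₂, hgap⟩ := hgap ht
  refine ⟨hindep, Bohr.finite_setOf_mem_genSet_le ht, fun ν hν hmem _ => ?_⟩
  exact ⟨c₁, hc₁, c₂, hc₂, fun n => hgap _ (hmem _) _ (hmem n) (hν n.lt_succ_self)⟩

/-- Adding almost any `N` Beurling primes to the ordinary primes retains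
Bohr's condition for the generated Beurling integers. -/
theorem bohr_condition_ae_extension_of_rational_primes (N : ℕ) (hN : 1 ≤ N) :
    ∀ᵐ t : Fin N → ℝ ∂volume, (∀ i, 1 < t i) →
      (LinearIndependent ℚ
          (Sum.elim (fun n : ℕ => Real.log (Nat.nth Nat.Prime n))
            (fun i : Fin N => Real.log (t i)))) ∧
      (∀ x : ℝ, {y ∈ genSet t | y ≤ x}.Finite) ∧
      (∀ ν : ℕ → ℝ, StrictMono ν → (∀ n, ν n ∈ genSet t) →
        (∀ y ∈ genSet t, ∃ n, ν n = y) → BohrCondition ν) :=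
  bohr_condition_ae_extension_of_rational_primes_general N
end
end

section
/- Let (ν_n)_{n≥1} be a strictly increasing sequence of real numbers with ν_1 ≥ 1 and ν_n → ∞, and let C_0 > 0 be such that ∑_{n≥1} ν_n^{−C_0} < ∞. Then the set of real numbers x > 1 for which there exist infinitely many triples (j, n, m) ∈ ℕ³ (with j, n, m ≥ 1) satisfying |x^j − ν_n/ν_m| ≤ ν_n^{−C_0} ν_m^{−C_0} has Lebesgue measure zero. -/
open Set Filter MeasureTheory

noncomputable section

lemma aux_pow_sub_pow_ge {a x y : ℝ} (ha : 0 ≤ a) (hax : a ≤ x) (hxy : x ≤ y) (n : ℕ) :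
    ((n : ℝ) + 1) * a ^ n * (y - x) ≤ y ^ (n + 1) - x ^ (n + 1) := by
  have h := geom_sum₂_mul y x (n + 1)
  rw [← h]
  have hay : a ≤ y := hax.trans hxy
  refine mul_le_mul_of_nonneg_right ?_ (by linarith)
  calc ((n : ℝ) + 1) * a ^ n = ∑ _i ∈ Finset.range (n + 1), a ^ n := by
        simp [Finset.sum_const, mul_comm]
    _ ≤ ∑ i ∈ Finset.range (n + 1), y ^ i * x ^ (n + 1 - 1 - i) := by
        refine Finset.sum_le_sum fun i hi => ?_
        have hi' : i ≤ n := Nat.lt_succ_iff.mp (Finset.mem_range.mp hi)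
        have h1 : a ^ n = a ^ i * a ^ (n - i) := by
          rw [← pow_add, Nat.add_sub_cancel' hi']
        have h2 : n + 1 - 1 - i = n - i := by omega
        rw [h1, h2]
        exact mul_le_mul (pow_le_pow_left₀ ha hay i) (pow_le_pow_left₀ ha hax _)
          (pow_nonneg ha _) (pow_nonneg (ha.trans hay) _)

lemma aux_measure_bound {a : ℝ} (ha : 1 ≤ a) (j : ℕ) (c ε : ℝ) :
    volume {x : ℝ | a ≤ x ∧ |x ^ (j + 1) - c| ≤ ε} ≤
      ENNReal.ofReal (2 / (((j : ℝ) + 1) * a ^ j) * ε) := by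
  refine (Real.volume_le_diam _).trans (EMetric.diam_le ?_)
  have hD : (0 : ℝ) < ((j : ℝ) + 1) * a ^ j := by positivity
  have key : ∀ x y : ℝ, x ∈ {x : ℝ | a ≤ x ∧ |x ^ (j + 1) - c| ≤ ε} →
      y ∈ {x : ℝ | a ≤ x ∧ |x ^ (j + 1) - c| ≤ ε} → x ≤ y →
      y - x ≤ 2 / (((j : ℝ) + 1) * a ^ j) * ε := by
    rintro x y ⟨hax, hx⟩ ⟨_, hy⟩ hxy
    have h0a : (0 : ℝ) ≤ a := by linarith
    have hlow := aux_pow_sub_pow_ge h0a hax hxy j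
    rw [abs_le] at hx hy
    rw [div_mul_eq_mul_div, le_div_iff₀ hD]
    nlinarith [hx.1, hx.2, hy.1, hy.2]
  rintro x hx y hy
  rw [edist_dist, Real.dist_eq]
  refine ENNReal.ofReal_le_ofReal ?_
  rcases le_total x y with h | h
  · rw [abs_sub_comm, abs_of_nonneg (by linarith)]; exact key x y hx hy h
  · rw [abs_of_nonneg (by linarith)]; exact key y x hy hx h


set_option maxHeartbeats 1000000 in
/-- Borel–Cantelli step: the set of `x > 1` admitting infinitely many triples
`(j, n, m)` with `|x^j - ν_n/ν_m| ≤ ν_n^{-C₀} ν_m^{-C₀}` is Lebesgue-null. -/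
theorem measure_zero_of_infinitely_many_approximations
    (ν : ℕ → ℝ) (hmono : StrictMono ν) (h1 : 1 ≤ ν 0)
    (htend : Tendsto ν atTop atTop)
    (C₀ : ℝ) (hC₀ : 0 < C₀) (hsum : Summable fun n => ν n ^ (-C₀)) :
    volume {x : ℝ | 1 < x ∧
      {t : ℕ × ℕ × ℕ |
        |x ^ (t.1 + 1) - ν t.2.1 / ν t.2.2| ≤
          ν t.2.1 ^ (-C₀) * ν t.2.2 ^ (-C₀)}.Infinite} = 0 := by
  have hν1 : ∀ n, (1 : ℝ) ≤ ν n := fun n => h1.trans (hmono.monotone (Nat.zero_le n))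
  have hg0 : ∀ n, (0 : ℝ) ≤ ν n ^ (-C₀) := fun n =>
    Real.rpow_nonneg (by linarith [hν1 n]) _
  -- the null pieces with x ≥ 1 + 1/(k+1)
  have key : ∀ k : ℕ, volume {x : ℝ | 1 + ((k : ℝ) + 1)⁻¹ ≤ x ∧
      {t : ℕ × ℕ × ℕ |
        |x ^ (t.1 + 1) - ν t.2.1 / ν t.2.2| ≤
          ν t.2.1 ^ (-C₀) * ν t.2.2 ^ (-C₀)}.Infinite} = 0 := by
    intro k
    set a : ℝ := 1 + ((k : ℝ) + 1)⁻¹ with ha_def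
    have ha1 : 1 < a := by
      rw [ha_def]
      have : (0 : ℝ) < ((k : ℝ) + 1)⁻¹ := by positivity
      linarith
    have ha0 : (0 : ℝ) < a := lt_trans zero_lt_one ha1
    clear_value a
    -- summability of the bounds
    have hF : Summable fun j : ℕ => 2 / (((j : ℝ) + 1) * a ^ j) := by
      refine Summable.of_nonneg_of_le (fun j => ?_)
        (fun j => ?_) (((summable_geometric_of_lt_one (inv_nonneg.mpr ha0.le)
          (inv_lt_one_of_one_lt₀ ha1)).mul_left 2))
      · exact le_of_lt (div_pos two_pos (mul_pos (by positivity) (pow_pos ha0 j)))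
      · have haj : (0 : ℝ) < a ^ j := pow_pos ha0 j
        have hj1 : (1 : ℝ) ≤ (j : ℝ) + 1 := by linarith [Nat.cast_nonneg (α := ℝ) j]
        have hrw : 2 * a⁻¹ ^ j = 2 / a ^ j := by rw [inv_pow]; ring
        rw [hrw, div_le_div_iff₀ (by positivity) haj]
        nlinarith
    have hg2 : Summable fun p : ℕ × ℕ => ν p.1 ^ (-C₀) * ν p.2 ^ (-C₀) :=
      hsum.mul_of_nonneg hsum hg0 hg0
    have hf : Summable fun t : ℕ × ℕ × ℕ =>
        2 / (((t.1 : ℝ) + 1) * a ^ t.1) * (ν t.2.1 ^ (-C₀) * ν t.2.2 ^ (-C₀)) :=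
      hF.mul_of_nonneg hg2 (fun j => le_of_lt (div_pos two_pos (mul_pos (by positivity) (pow_pos ha0 j)))) fun p => mul_nonneg (hg0 _) (hg0 _)
    have hfnonneg : ∀ t : ℕ × ℕ × ℕ,
        0 ≤ 2 / (((t.1 : ℝ) + 1) * a ^ t.1) * (ν t.2.1 ^ (-C₀) * ν t.2.2 ^ (-C₀)) :=
      fun t => mul_nonneg (by positivity) (mul_nonneg (hg0 _) (hg0 _))
    set s : ℕ × ℕ × ℕ → Set ℝ := fun t =>
      {x : ℝ | a ≤ x ∧ |x ^ (t.1 + 1) - ν t.2.1 / ν t.2.2| ≤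
        ν t.2.1 ^ (-C₀) * ν t.2.2 ^ (-C₀)} with hs_def
    have htsum : ∑' t, volume (s t) ≠ ⊤ := by
      have hle : ∑' t, volume (s t) ≤
          ∑' t : ℕ × ℕ × ℕ, ENNReal.ofReal
            (2 / (((t.1 : ℝ) + 1) * a ^ t.1) * (ν t.2.1 ^ (-C₀) * ν t.2.2 ^ (-C₀))) :=
        ENNReal.tsum_le_tsum fun t => aux_measure_bound ha1.le t.1 _ _
      have heq := (ENNReal.ofReal_tsum_of_nonneg hfnonneg hf).symm
      rw [heq] at hle
      exact ne_top_of_le_ne_top ENNReal.ofReal_ne_top hle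
    have hsub : {x : ℝ | a ≤ x ∧
        {t : ℕ × ℕ × ℕ |
          |x ^ (t.1 + 1) - ν t.2.1 / ν t.2.2| ≤
            ν t.2.1 ^ (-C₀) * ν t.2.2 ^ (-C₀)}.Infinite} ⊆ limsup s cofinite := by
      rintro x ⟨hax, hinf⟩
      rw [mem_limsup_iff_frequently_mem, frequently_cofinite_iff_infinite]
      exact hinf.mono fun t ht => ⟨hax, ht⟩
    exact measure_mono_null hsub (measure_limsup_cofinite_eq_zero htsum)
  refine measure_mono_null (fun x hx => ?_) (measure_iUnion_null key)
  obtain ⟨hx1, hinf⟩ := hx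
  obtain ⟨k, hk⟩ := exists_nat_one_div_lt (sub_pos.mpr hx1)
  refine mem_iUnion.mpr ⟨k, ?_, hinf⟩
  rw [one_div] at hk
  linarith
end
end

section
/- Let q = (q_n)_{n≥1} be a sequence of Beurling primes with Beurling integers (ν_n)_{n≥1}, and let C_0 > 0 be such that ∑_{n≥1} ν_n^{−C_0} < ∞. Then for Lebesgue-almost every x ∈ (1,∞) there exists a constant c > 0 such that |x^j − ν_n/ν_m| ≥ c ν_n^{−C_0} ν_m^{−C_0} for all triples (j, n, m) ∈ ℕ³ with j, n, m ≥ 1. -/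
open Set Filter MeasureTheory

noncomputable section

/-!
A Borel–Cantelli argument. On `[A, ∞)` with `A > 1` the map `x ↦ x ^ (j + 1)` expands distances
by at least `A ^ j`, so the `x ≥ A` with `|x ^ (j + 1) - a| < δ` form a set of measure at most
`2 δ A⁻ʲ`. Summing over `j` and over the targets `ν n / ν m` with `δ = c ν_n^{-C₀} ν_m^{-C₀}`,
the `x ≥ A` that fail for the constant `c` form a set of measure `O(c)`; hence the `x` that fail
for every `c > 0` form a null set.
-/

open scoped ENNReal Topology

lemma abs_sub_mul_pow_le_abs_pow_succ_sub_pow_succ {A x y : ℝ} (hA : 0 ≤ A) (hx : A ≤ x)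
    (hy : A ≤ y) (j : ℕ) : |x - y| * A ^ j ≤ |x ^ (j + 1) - y ^ (j + 1)| := by
  have hterm : ∀ i ∈ Finset.range (j + 1), A ^ j ≤ x ^ i * y ^ (j + 1 - 1 - i) := by
    intro i hi
    have hij : i + (j - i) = j := Nat.add_sub_cancel' (Nat.lt_succ_iff.mp (Finset.mem_range.mp hi))
    calc A ^ j = A ^ i * A ^ (j - i) := by rw [← pow_add, hij]
      _ ≤ x ^ i * y ^ (j + 1 - 1 - i) := by
        rw [Nat.add_sub_cancel]
        exact mul_le_mul (pow_le_pow_left₀ hA hx i) (pow_le_pow_left₀ hA hy _)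
          (pow_nonneg hA _) (pow_nonneg (hA.trans hx) i)
  have hsum : A ^ j ≤ ∑ i ∈ Finset.range (j + 1), x ^ i * y ^ (j + 1 - 1 - i) := by
    rw [Finset.sum_range_succ']
    have htail : 0 ≤ ∑ i ∈ Finset.range j, x ^ (i + 1) * y ^ (j + 1 - 1 - (i + 1)) :=
      Finset.sum_nonneg fun i hi => (pow_nonneg hA j).trans
        (hterm _ (Finset.mem_range.mpr (by simpa using hi)))
    linarith [hterm 0 (by simp)]
  rw [← geom_sum₂_mul, abs_mul, abs_of_nonneg ((pow_nonneg hA j).trans hsum), mul_comm |x - y|]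
  exact mul_le_mul_of_nonneg_right hsum (abs_nonneg _)

lemma volume_near_pow_le {A : ℝ} (hA : 0 < A) (j : ℕ) (a δ : ℝ) :
    volume {x : ℝ | A ≤ x ∧ |x ^ (j + 1) - a| < δ} ≤ ENNReal.ofReal (2 * δ * A⁻¹ ^ j) := by
  refine (Real.volume_le_diam _).trans (Metric.ediam_le fun x hx y hy => ?_)
  rw [edist_dist, Real.dist_eq]
  refine ENNReal.ofReal_le_ofReal ?_
  have hpow : |x ^ (j + 1) - y ^ (j + 1)| < 2 * δ := by
    calc |x ^ (j + 1) - y ^ (j + 1)| ≤ |x ^ (j + 1) - a| + |a - y ^ (j + 1)| := abs_sub_le _ _ _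
      _ < 2 * δ := by rw [abs_sub_comm a]; linarith [hx.2, hy.2]
  rw [inv_pow, ← div_eq_mul_inv, le_div_iff₀ (pow_pos hA j)]
  exact (abs_sub_mul_pow_le_abs_pow_succ_sub_pow_succ hA.le hx.1 hy.1 j).trans hpow.le

lemma measure_eq_zero_of_le_ofReal_mul {α : Type*} [MeasurableSpace α] {μ : Measure α}
    {s : Set α} {M : ℝ≥0∞} (hM : M ≠ ∞) (h : ∀ c > 0, μ s ≤ ENNReal.ofReal c * M) :
    μ s = 0 := by
  have hlim : Tendsto (fun c : ℝ => ENNReal.ofReal c * M) (𝓝[>] 0) (𝓝 0) := by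
    simpa using ENNReal.Tendsto.mul_const
      (ENNReal.tendsto_ofReal (tendsto_nhdsWithin_of_tendsto_nhds (tendsto_id (x := 𝓝 (0 : ℝ)))))
      (Or.inr hM)
  exact le_antisymm (ge_of_tendsto hlim (eventually_nhdsWithin_of_forall h)) zero_le

lemma ae_exists_forall_le_abs_pow_sub {ι : Type*} [Countable ι] (a : ι → ℝ) {ε : ι → ℝ}
    (hε : 0 ≤ ε) (hsum : Summable ε) {A : ℝ} (hA : 1 < A) :
    ∀ᵐ x : ℝ, A ≤ x → ∃ c > 0, ∀ j i, c * ε i ≤ |x ^ (j + 1) - a i| := by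
  have hA₀ : 0 < A := zero_lt_one.trans hA
  set g : ℕ × ι → ℝ := fun t => A⁻¹ ^ t.1 * (2 * ε t.2)
  have hg₀ : 0 ≤ g := fun t => mul_nonneg (pow_nonneg (inv_nonneg.2 hA₀.le) _)
    (mul_nonneg zero_le_two (hε t.2))
  have hg : Summable g :=
    (summable_geometric_of_lt_one (inv_nonneg.2 hA₀.le) (inv_lt_one_of_one_lt₀ hA)).mul_of_nonneg
      (hsum.mul_left 2) (fun j => pow_nonneg (inv_nonneg.2 hA₀.le) j)
      (fun i => mul_nonneg zero_le_two (hε i))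
  suffices h : ∀ᵐ x : ℝ, ∃ c > 0, A ≤ x → ∀ j i, c * ε i ≤ |x ^ (j + 1) - a i| by
    filter_upwards [h] with x ⟨c, hc, hx⟩ hAx using ⟨c, hc, hx hAx⟩
  rw [ae_iff]
  refine measure_eq_zero_of_le_ofReal_mul ENNReal.ofReal_ne_top (M := .ofReal (∑' t, g t))
    fun c hc => ?_
  calc volume {x | ¬∃ c > 0, A ≤ x → ∀ j i, c * ε i ≤ |x ^ (j + 1) - a i|}
      ≤ volume (⋃ t : ℕ × ι, {x | A ≤ x ∧ |x ^ (t.1 + 1) - a t.2| < c * ε t.2}) := by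
        refine measure_mono fun x hx => ?_
        have hbad : ¬(A ≤ x → ∀ j i, c * ε i ≤ |x ^ (j + 1) - a i|) := fun h => hx ⟨c, hc, h⟩
        push Not at hbad
        obtain ⟨hAx, j, i, hji⟩ := hbad
        exact mem_iUnion.2 ⟨(j, i), hAx, hji⟩
    _ ≤ ∑' t : ℕ × ι, volume {x | A ≤ x ∧ |x ^ (t.1 + 1) - a t.2| < c * ε t.2} :=
        measure_iUnion_le _
    _ ≤ ∑' t, ENNReal.ofReal (c * g t) := ENNReal.tsum_le_tsum fun t =>
        (volume_near_pow_le hA₀ t.1 _ _).trans_eq (by congr 1; ring)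
    _ = ENNReal.ofReal c * ENNReal.ofReal (∑' t, g t) := by
        rw [← ENNReal.ofReal_tsum_of_nonneg (fun t => mul_nonneg hc.le (hg₀ t)) (hg.mul_left c),
          tsum_mul_left, ENNReal.ofReal_mul hc.le]

lemma ae_lt_imp_of_forall_lt_ae_le {μ : Measure ℝ} {p : ℝ → Prop} {a : ℝ}
    (h : ∀ b > a, ∀ᵐ x ∂μ, b ≤ x → p x) : ∀ᵐ x ∂μ, a < x → p x := by
  have hall := ae_all_iff.2 fun n : ℕ => h (a + 1 / (n + 1)) (lt_add_of_pos_right a (by positivity))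
  filter_upwards [hall] with x hx hax
  obtain ⟨n, hn⟩ := exists_nat_one_div_lt (sub_pos.2 hax)
  exact hx n (by linarith)

lemma IsBeurlingPrimes.pos {q : ℕ → ℝ} (hq : IsBeurlingPrimes q) (i : ℕ) : 0 < q i :=
  zero_lt_one.trans (hq.2.1.trans_le (hq.1.monotone (Nat.zero_le i)))

lemma pos_of_mem_beurlingIntegers {q : ℕ → ℝ} (hq : ∀ i, 0 < q i) {x : ℝ}
    (hx : x ∈ beurlingIntegers q) : 0 < x := by
  obtain ⟨e, rfl⟩ := hx
  exact Finset.prod_pos fun i _ => pow_pos (hq i) _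

theorem ae_uniform_separation_from_ratios_general (q ν : ℕ → ℝ) (hq : IsBeurlingPrimes q)
    (hν : IsEnumeration ν (beurlingIntegers q))
    (C₀ : ℝ) (hsum : Summable fun n => ν n ^ (-C₀)) :
    ∀ᵐ x : ℝ ∂volume, x ∈ Set.Ioi (1:ℝ) →
      ∃ c > (0:ℝ), ∀ j n m : ℕ,
        |x ^ (j + 1) - ν n / ν m| ≥ c * ν n ^ (-C₀) * ν m ^ (-C₀) := by
  have hw : ∀ n, 0 ≤ ν n ^ (-C₀) := fun n =>
    Real.rpow_nonneg (pos_of_mem_beurlingIntegers hq.pos (hν.2.2.1 n)).le _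
  have hsep := ae_lt_imp_of_forall_lt_ae_le fun A hA =>
    ae_exists_forall_le_abs_pow_sub (fun t : ℕ × ℕ => ν t.1 / ν t.2)
      (fun t => mul_nonneg (hw t.1) (hw t.2)) (hsum.mul_of_nonneg hsum hw hw) hA
  filter_upwards [hsep] with x hx hx1
  obtain ⟨c, hc, hbound⟩ := hx hx1
  exact ⟨c, hc, fun j n m => by simpa only [mul_assoc] using hbound j (n, m)⟩

/-- For a.e. `x > 1`, all powers of `x` are uniformly polynomially separated from
all ratios of Beurling integers. -/
theorem ae_uniform_separation_from_ratios (q ν : ℕ → ℝ) (hq : IsBeurlingPrimes q)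
    (hν : IsEnumeration ν (beurlingIntegers q))
    (C₀ : ℝ) (hC₀ : 0 < C₀) (hsum : Summable fun n => ν n ^ (-C₀)) :
    ∀ᵐ x : ℝ ∂volume, x ∈ Set.Ioi (1:ℝ) →
      ∃ c > (0:ℝ), ∀ j n m : ℕ,
        |x ^ (j + 1) - ν n / ν m| ≥ c * ν n ^ (-C₀) * ν m ^ (-C₀) :=
  ae_uniform_separation_from_ratios_general q ν hq hν C₀ hsum
end
end

section
/- Let q = (q_n)_{n≥1} be a sequence of Beurling primes whose Beurling integers (ν_n)_{n≥1} satisfy ν_{n+1} − ν_n ≥ c ν_{n+1}^{−C} for all n ≥ 1, for some c, C > 0. Let q' > 1 be a real number such that log q' does not lie in the ℚ-linear span of {log q_n}_{n≥1}, and suppose that there exist constants c_0 > 0 and C_0 ≥ 1 such that |(q')^j − ν_n/ν_m| ≥ c_0 ν_n^{−C_0} ν_m^{−C_0} for all triples (j, n, m) ∈ ℕ³ with j, n, m ≥ 1. Then the Beurling integers (ν'_n)_{n≥1} generated by the prime system {q_n}_{n≥1} ∪ {q'} satisfy Bohr's condition: there exist c_1, c_2 > 0 with ν'_{n+1} − ν'_n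 ≥ c_1 (ν'_{n+1})^{−c_2} for all n ≥ 1. -/
open Set Filter MeasureTheory

noncomputable section

lemma one_le_beurling {q : ℕ → ℝ} (hq : IsBeurlingPrimes q) {x : ℝ}
    (hx : x ∈ beurlingIntegers q) : 1 ≤ x := by
  obtain ⟨e, rfl⟩ := hx
  rw [Finsupp.prod]
  calc (1:ℝ) = ∏ _i ∈ e.support, 1 := Finset.prod_const_one.symm
  _ ≤ ∏ i ∈ e.support, q i ^ e i := by
      refine Finset.prod_le_prod (fun i _ => zero_le_one) fun i _ => one_le_pow₀ ?_
      exact le_trans hq.2.1.le (hq.1.monotone (Nat.zero_le i))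


/-- If the integers of `q` satisfy a polynomial separation condition and `q' > 1` has
powers uniformly separated from ratios of integers of `q` (and `log q'` is not in the
`ℚ`-span of the `log q_n`), then the integers of `{q_n} ∪ {q'}` satisfy Bohr's
condition. -/
theorem bohr_of_extension (q ν : ℕ → ℝ) (hq : IsBeurlingPrimes q)
    (hν : IsEnumeration ν (beurlingIntegers q))
    (c C : ℝ) (hc : 0 < c) (hC : 0 < C)
    (hdist : ∀ n : ℕ, ν (n+1) - ν n ≥ c * ν (n+1) ^ (-C))
    (q' : ℝ) (hq' : 1 < q')
    (hind : Real.log q' ∉ Submodule.span ℚ (Set.range fun n => Real.log (q n)))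
    (c₀ C₀ : ℝ) (hc₀ : 0 < c₀) (hC₀ : 1 ≤ C₀)
    (hsep : ∀ j n m : ℕ,
      |q' ^ (j + 1) - ν n / ν m| ≥ c₀ * ν n ^ (-C₀) * ν m ^ (-C₀)) :
    ∀ ν' : ℕ → ℝ,
      IsEnumeration ν' {x : ℝ | ∃ a : ℕ, ∃ y ∈ beurlingIntegers q, x = q' ^ a * y} →
      BohrCondition ν' := by
  intro ν' hν'
  obtain ⟨hmono, htend, hmem, hsurj⟩ := hν
  obtain ⟨hmono', htend', hmem', hsurj'⟩ := hν'
  have hq'0 : (0:ℝ) < q' := lt_trans one_pos hq'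
  -- gap lemma inside the original system
  have gap : ∀ a b : ℕ, ν a < ν b → c * ν b ^ (-C) ≤ ν b - ν a := by
    intro a b hab
    have hlt : a < b := hmono.lt_iff_lt.mp hab
    obtain ⟨b', rfl⟩ : ∃ b', b = b' + 1 := ⟨b - 1, by omega⟩
    have h1 : ν a ≤ ν b' := hmono.monotone (Nat.lt_succ_iff.mp hlt)
    have := hdist b'
    linarith
  refine ⟨min c c₀, lt_min hc hc₀, max C (2*C₀), lt_max_of_lt_left hC, fun n => ?_⟩
  obtain ⟨a, μ, hμ, hx⟩ := hmem' n
  obtain ⟨b, lam, hlam, hy⟩ := hmem' (n+1)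
  have hμ1 : 1 ≤ μ := one_le_beurling hq hμ
  have hlam1 : 1 ≤ lam := one_le_beurling hq hlam
  have hμ0 : (0:ℝ) < μ := lt_of_lt_of_le one_pos hμ1
  have hlam0 : (0:ℝ) < lam := lt_of_lt_of_le one_pos hlam1
  have hqa1 : (1:ℝ) ≤ q' ^ a := one_le_pow₀ hq'.le
  have hqb1 : (1:ℝ) ≤ q' ^ b := one_le_pow₀ hq'.le
  have hxy : ν' n < ν' (n+1) := hmono' (Nat.lt_succ_self n)
  have hy1 : 1 ≤ ν' (n+1) := by
    rw [hy]; calc (1:ℝ) ≤ lam := hlam1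
    _ ≤ q' ^ b * lam := le_mul_of_one_le_left hlam0.le hqb1
  have hy0 : (0:ℝ) < ν' (n+1) := lt_of_lt_of_le one_pos hy1
  have hlamy : lam ≤ ν' (n+1) := by
    rw [hy]; exact le_mul_of_one_le_left hlam0.le hqb1
  have hμy : μ ≤ ν' (n+1) := by
    rw [hx] at hxy
    calc μ ≤ q' ^ a * μ := le_mul_of_one_le_left hμ0.le hqa1
    _ ≤ ν' (n+1) := le_of_lt hxy
  -- the target exponent bound
  have hexp : ν' (n+1) ^ (-(max C (2*C₀))) ≤ ν' (n+1) ^ (-C) :=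
    Real.rpow_le_rpow_of_exponent_le hy1 (neg_le_neg (le_max_left _ _))
  have hexp2 : ν' (n+1) ^ (-(max C (2*C₀))) ≤ ν' (n+1) ^ (-(2*C₀)) :=
    Real.rpow_le_rpow_of_exponent_le hy1 (neg_le_neg (le_max_right _ _))
  have hsplit : ν' (n+1) ^ (-(2*C₀)) = ν' (n+1) ^ (-C₀) * ν' (n+1) ^ (-C₀) := by
    rw [← Real.rpow_add hy0]; ring_nf
  have hanti1 : ν' (n+1) ^ (-C₀) ≤ lam ^ (-C₀) :=
    Real.rpow_le_rpow_of_nonpos hlam0 hlamy (neg_nonpos.mpr (le_trans zero_le_one hC₀))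
  have hanti2 : ν' (n+1) ^ (-C₀) ≤ μ ^ (-C₀) :=
    Real.rpow_le_rpow_of_nonpos hμ0 hμy (neg_nonpos.mpr (le_trans zero_le_one hC₀))
  have hrpow_pos : (0:ℝ) < ν' (n+1) ^ (-C₀) := Real.rpow_pos_of_pos hy0 _
  -- main lower bound on the difference
  have key : c₀ * lam ^ (-C₀) * μ ^ (-C₀) ≤ ν' (n+1) - ν' n ∨
      c * lam ^ (-C) ≤ ν' (n+1) - ν' n := by
    obtain ⟨nμ, hnμ⟩ := hsurj μ hμ
    obtain ⟨nlam, hnlam⟩ := hsurj lam hlam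
    rcases lt_trichotomy a b with hab | hab | hab
    · -- a < b
      left
      obtain ⟨j, hj⟩ : ∃ j, b - a = j + 1 := ⟨b - a - 1, by omega⟩
      have hbj : b = a + (j+1) := by omega
      have hlt : μ < q' ^ (j+1) * lam := by
        rw [hx, hy, hbj, pow_add, mul_assoc] at hxy
        exact lt_of_mul_lt_mul_left hxy (le_of_lt (pow_pos hq'0 a))
      have hs := hsep j nμ nlam
      rw [hnμ, hnlam] at hs
      have hratio : μ / lam < q' ^ (j+1) := (div_lt_iff₀ hlam0).mpr (by linarith [hlt])
      have habs : q' ^ (j+1) - μ / lam ≥ c₀ * μ ^ (-C₀) * lam ^ (-C₀) := by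
        rw [abs_of_pos (by linarith)] at hs; exact hs
      have hmul : q' ^ (j+1) * lam - μ ≥ c₀ * μ ^ (-C₀) * lam ^ (-C₀) := by
        have h2 : (q' ^ (j+1) - μ / lam) * lam ≥ (c₀ * μ ^ (-C₀) * lam ^ (-C₀)) * 1 := by
          apply mul_le_mul habs hlam1 zero_le_one (by linarith)
        rw [sub_mul, div_mul_cancel₀ _ (ne_of_gt hlam0)] at h2
        linarith
      have hfin : ν' (n+1) - ν' n = q' ^ a * (q' ^ (j+1) * lam - μ) := by
        rw [hx, hy, hbj, pow_add]; ring
      rw [hfin]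
      calc c₀ * lam ^ (-C₀) * μ ^ (-C₀) = c₀ * μ ^ (-C₀) * lam ^ (-C₀) := by ring
      _ = 1 * (c₀ * μ ^ (-C₀) * lam ^ (-C₀)) := (one_mul _).symm
      _ ≤ q' ^ a * (q' ^ (j+1) * lam - μ) := by
          apply mul_le_mul hqa1 hmul ?_ (by positivity)
          positivity
    · -- a = b
      right
      subst hab
      have hlt : μ < lam := by
        rw [hx, hy] at hxy
        exact lt_of_mul_lt_mul_left hxy (le_of_lt (pow_pos hq'0 a))
      have hg : c * lam ^ (-C) ≤ lam - μ := by
        have := gap nμ nlam (by rw [hnμ, hnlam]; exact hlt)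
        rw [hnμ, hnlam] at this; exact this
      have hfin : ν' (n+1) - ν' n = q' ^ a * (lam - μ) := by rw [hx, hy]; ring
      rw [hfin]
      calc c * lam ^ (-C) = 1 * (c * lam ^ (-C)) := (one_mul _).symm
      _ ≤ q' ^ a * (lam - μ) := by
          apply mul_le_mul hqa1 hg (by positivity) (by positivity)
    · -- b < a
      left
      obtain ⟨j, hj⟩ : ∃ j, a - b = j + 1 := ⟨a - b - 1, by omega⟩
      have haj : a = b + (j+1) := by omega
      have hlt : q' ^ (j+1) * μ < lam := by
        rw [hx, hy, haj, pow_add, mul_assoc] at hxy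
        exact lt_of_mul_lt_mul_left hxy (le_of_lt (pow_pos hq'0 b))
      have hs := hsep j nlam nμ
      rw [hnμ, hnlam] at hs
      have hratio : q' ^ (j+1) < lam / μ := (lt_div_iff₀ hμ0).mpr (by linarith [hlt])
      have habs : lam / μ - q' ^ (j+1) ≥ c₀ * lam ^ (-C₀) * μ ^ (-C₀) := by
        rw [abs_sub_comm, abs_of_pos (by linarith)] at hs; exact hs
      have hmul : lam - q' ^ (j+1) * μ ≥ c₀ * lam ^ (-C₀) * μ ^ (-C₀) := by
        have h2 : (lam / μ - q' ^ (j+1)) * μ ≥ (c₀ * lam ^ (-C₀) * μ ^ (-C₀)) * 1 := by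
          apply mul_le_mul habs hμ1 zero_le_one (by linarith)
        rw [sub_mul, div_mul_cancel₀ _ (ne_of_gt hμ0)] at h2
        linarith
      have hfin : ν' (n+1) - ν' n = q' ^ b * (lam - q' ^ (j+1) * μ) := by
        rw [hx, hy, haj, pow_add]; ring
      rw [hfin]
      calc c₀ * lam ^ (-C₀) * μ ^ (-C₀) = 1 * (c₀ * lam ^ (-C₀) * μ ^ (-C₀)) := (one_mul _).symm
      _ ≤ q' ^ b * (lam - q' ^ (j+1) * μ) := by
          apply mul_le_mul hqb1 hmul (by positivity) (by positivity)
  rcases key with hk | hk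
  · calc min c c₀ * ν' (n+1) ^ (-(max C (2*C₀)))
        ≤ c₀ * ν' (n+1) ^ (-(2*C₀)) := by
          apply mul_le_mul (min_le_right _ _) hexp2 (by positivity) hc₀.le
    _ = c₀ * (ν' (n+1) ^ (-C₀) * ν' (n+1) ^ (-C₀)) := by rw [hsplit]
    _ ≤ c₀ * (lam ^ (-C₀) * μ ^ (-C₀)) := by
          apply mul_le_mul_of_nonneg_left ?_ hc₀.le
          apply mul_le_mul hanti1 hanti2 hrpow_pos.le (by positivity)
    _ = c₀ * lam ^ (-C₀) * μ ^ (-C₀) := by ring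
    _ ≤ ν' (n+1) - ν' n := hk
  · calc min c c₀ * ν' (n+1) ^ (-(max C (2*C₀)))
        ≤ c * ν' (n+1) ^ (-C) := by
          apply mul_le_mul (min_le_left _ _) hexp (by positivity) hc.le
    _ ≤ c * lam ^ (-C) := by
          apply mul_le_mul_of_nonneg_left ?_ hc.le
          exact Real.rpow_le_rpow_of_nonpos hlam0 hlamy (neg_nonpos.mpr hC.le)
    _ ≤ ν' (n+1) - ν' n := hk
end
end

section
/- Let q = (q_n)_{n≥1} be a sequence of Beurling primes with σ_c(ζ_q) < ∞ and Beurling integers (ν_n)_{n≥1}. Then for Lebesgue-almost every x ∈ ℝ the following holds: for every r > 2σ_c(ζ_q), there are only finitely many pairs (m, n) ∈ ℕ² (m, n ≥ 1) with |x − ν_m/ν_n| < ν_n^{−r}. In other words, the irrationality measure μ_q(x) of x relative to the system ℕ_q satisfies μ_q(x) ≤ 2σ_c(ζ_q) for almost every x ∈ ℝ. -/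
open Set Filter MeasureTheory

noncomputable section

/-!
Borel–Cantelli. Fix `σ` with `∑ ν_n^{-σ} < ∞` and `r > 2σ`. A point `x ∈ [-N, N]` can lie within
`ν_n^{-r}` of `ν_m/ν_n` only if `ν_m < (N + 1) ν_n`, so the measure of the corresponding set is at most
`2 ν_n^{-r} ((N + 1) ν_n / ν_m)^σ`. This weight factors as `ν_m^{-σ} · ν_n^{σ-r}` up to a constant,
and both factors are summable, so almost every `x` lies in only finitely many of these sets.
Letting `σ` decrease to `σ_c` along a sequence gives the statement for all `r > 2σ_c` at once.
-/

theorem IsBeurlingPrimes.one_lt {q : ℕ → ℝ} (hq : IsBeurlingPrimes q) (i : ℕ) : 1 < q i :=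
  hq.2.1.trans_le (hq.1.monotone i.zero_le)

theorem one_le_of_mem_beurlingIntegers {q : ℕ → ℝ} (hq : ∀ i, 1 ≤ q i) {x : ℝ}
    (hx : x ∈ beurlingIntegers q) : 1 ≤ x := by
  obtain ⟨e, rfl⟩ := hx
  exact Finset.one_le_prod fun i _ => one_le_pow₀ (hq i)

theorem volume_Icc_inter_ball_le {R c ε σ : ℝ} (hc : 0 < c) (hε₀ : 0 ≤ ε) (hε : ε ≤ 1)
    (hσ : 0 ≤ σ) :
    volume (Icc (-R) R ∩ Metric.ball c ε) ≤ ENNReal.ofReal (2 * ε * ((R + 1) / c) ^ σ) := by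
  by_cases h : c < R + 1
  · have hbase : 1 ≤ ((R + 1) / c) ^ σ :=
      Real.one_le_rpow ((one_le_div hc).2 h.le) hσ
    calc volume (Icc (-R) R ∩ Metric.ball c ε)
        ≤ volume (Metric.ball c ε) := measure_mono inter_subset_right
      _ = ENNReal.ofReal (2 * ε) := Real.volume_ball _ _
      _ ≤ _ := ENNReal.ofReal_le_ofReal (le_mul_of_one_le_right (by positivity) hbase)
  · have hempty : Icc (-R) R ∩ Metric.ball c ε = ∅ := by
      refine eq_empty_of_forall_notMem fun y ⟨hyR, hy⟩ => ?_
      rw [Metric.mem_ball, Real.dist_eq, abs_lt] at hy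
      linarith [hyR.2]
    simp [hempty]

section RpowSeries

variable {ν : ℕ → ℝ} {σ r : ℝ}

theorem pos_of_summable_rpow_neg (hν : ∀ n, 1 ≤ ν n) (h : Summable fun n => ν n ^ (-σ)) :
    0 < σ := by
  by_contra! hσ
  have := ge_of_tendsto' h.tendsto_atTop_zero fun n => Real.one_le_rpow (hν n) (neg_nonneg.2 hσ)
  norm_num at this

theorem Summable.rpow_neg_of_le (hν : ∀ n, 1 ≤ ν n) (h : Summable fun n => ν n ^ (-σ))
    {τ : ℝ} (hστ : σ ≤ τ) : Summable fun n => ν n ^ (-τ) :=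
  h.of_nonneg_of_le (fun n => Real.rpow_nonneg (zero_le_one.trans (hν n)) _)
    fun n => Real.rpow_le_rpow_of_exponent_le (hν n) (neg_le_neg hστ)

theorem ae_finite_setOf_mem_Icc_inter_ball (hν : ∀ n, 1 ≤ ν n)
    (hσ : Summable fun n => ν n ^ (-σ)) (hr : 2 * σ < r) (N : ℕ) :
    ∀ᵐ x : ℝ, {p : ℕ × ℕ |
      x ∈ Icc (-(N : ℝ)) N ∩ Metric.ball (ν p.1 / ν p.2) (ν p.2 ^ (-r))}.Finite := by
  have hσ₀ := pos_of_summable_rpow_neg hν hσ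
  have hν₀ : ∀ n, 0 < ν n := fun n => zero_lt_one.trans_le (hν n)
  set f : ℕ × ℕ → ℝ := fun p => ν p.1 ^ (-σ) * (2 * (N + 1 : ℝ) ^ σ * ν p.2 ^ (-(r - σ)))
  have hf : Summable f :=
    hσ.mul_of_nonneg ((hσ.rpow_neg_of_le hν (by linarith)).mul_left _)
      (fun n => (Real.rpow_pos_of_pos (hν₀ n) _).le)
      (fun n => by have := Real.rpow_pos_of_pos (hν₀ n) (-(r - σ)); positivity)
  refine ae_finite_setOfPred_mem (ne_top_of_le_ne_top
    (ENNReal.ofReal_tsum_of_nonneg (fun p => ?_) hf ▸ ENNReal.ofReal_ne_top)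
    (ENNReal.tsum_le_tsum fun p => ?_))
  · have hε := Real.rpow_pos_of_pos (hν₀ p.2) (-r)
    calc _ ≤ ENNReal.ofReal (2 * ν p.2 ^ (-r) * ((N + 1) / (ν p.1 / ν p.2)) ^ σ) :=
          volume_Icc_inter_ball_le (div_pos (hν₀ _) (hν₀ _)) hε.le
            (Real.rpow_le_one_of_one_le_of_nonpos (hν _) (by linarith)) hσ₀.le
      _ = ENNReal.ofReal (f p) := by
          have hN : (0 : ℝ) ≤ N + 1 := by positivity
          rw [div_div_eq_mul_div, Real.div_rpow (mul_nonneg hN (hν₀ _).le) (hν₀ _).le,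
            Real.mul_rpow hN (hν₀ _).le]
          simp only [f, Real.rpow_neg (hν₀ _).le, neg_sub, Real.rpow_sub (hν₀ _)]
          field_simp
  · have := Real.rpow_pos_of_pos (hν₀ p.1) (-σ)
    have := Real.rpow_pos_of_pos (hν₀ p.2) (-(r - σ))
    positivity

theorem ae_finite_setOf_abs_sub_div_lt (hν : ∀ n, 1 ≤ ν n)
    (hσ : Summable fun n => ν n ^ (-σ)) (hr : 2 * σ < r) :
    ∀ᵐ x : ℝ, {p : ℕ × ℕ | |x - ν p.1 / ν p.2| < ν p.2 ^ (-r)}.Finite := by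
  filter_upwards [ae_all_iff.2 (ae_finite_setOf_mem_Icc_inter_ball hν hσ hr)] with x hx
  obtain ⟨N, hN⟩ := exists_nat_ge |x|
  refine (hx N).subset fun p hp => ⟨abs_le.1 hN, ?_⟩
  rwa [Metric.mem_ball, Real.dist_eq]

end RpowSeries

/-- Irrationality measure with respect to a Beurling system: for a.e. `x ∈ ℝ`,
`μ_q(x) ≤ 2 σ_c(ζ_q)`, i.e. for every `r > 2 σ_c(ζ_q)` only finitely many pairs
`(m, n)` satisfy `|x - ν_m/ν_n| < ν_n^{-r}`. -/
theorem ae_irrationality_measure_le (q ν : ℕ → ℝ) (hq : IsBeurlingPrimes q)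
    (hν : IsEnumeration ν (beurlingIntegers q))
    (hσc : ∃ σ : ℝ, Summable fun n => ν n ^ (-σ)) :
    ∀ᵐ x : ℝ ∂volume, ∀ r : ℝ, 2 * sigmaC ν < r →
      {p : ℕ × ℕ | |x - ν p.1 / ν p.2| < ν p.2 ^ (-r)}.Finite := by
  have hν₁ : ∀ n, 1 ≤ ν n := fun n =>
    one_le_of_mem_beurlingIntegers (fun i => (hq.one_lt i).le) (hν.2.2.1 n)
  have hk : ∀ k : ℕ, ∀ᵐ x : ℝ,
      {p : ℕ × ℕ | |x - ν p.1 / ν p.2| < ν p.2 ^ (-(2 * sigmaC ν + 1 / (k + 1)))}.Finite := by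
    intro k
    have hgap : (0 : ℝ) < 1 / (k + 1) / 2 := by positivity
    obtain ⟨σ, hσ, hσlt⟩ := exists_lt_of_csInf_lt hσc (lt_add_of_pos_right (sigmaC ν) hgap)
    exact ae_finite_setOf_abs_sub_div_lt hν₁ hσ (by linarith)
  filter_upwards [ae_all_iff.2 hk] with x hx r hr
  obtain ⟨k, hkr⟩ := exists_nat_one_div_lt (sub_pos.2 hr)
  exact (hx k).subset fun p hp =>
    hp.trans_le (Real.rpow_le_rpow_of_exponent_le (hν₁ _) (by linarith))
end
end
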